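/- arXiv:2502.04849 — 3 statements merged into one kernel-verified Lean document; each statement's English description precedes it below -/
import Mathlib

section
/- Let t₁ < t₂, let m : [t₁,t₂] → ℝ be continuous, and let b : [t₁,t₂] × ℝ^d → ℝ^d satisfy ⟨b(t,x) − b(t,y), x − y⟩ ≤ −m(t)·‖x − y‖² for all t ∈ [t₁,t₂] and x, y ∈ ℝ^d. If H, G : [t₁,t₂] → ℝ^d are differentiable and satisfy H'(t) − G'(t) = (1/2)(H(t) − G(t)) + b(t, H(t)) − b(t, G(t)) for all t ∈ [t₁,t₂], then for every t ∈ [t₁,t₂], ‖H(t) − G(t)‖ ≤ exp(−∫_{t₁}^{t} (m(s) − 1/2) ds)·‖H(t₁) − G(t₁)‖. -/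
/-!
The difference `D = H - G` satisfies `⟪D, D'⟫ = ½‖D‖² + ⟪D, b(t,H) - b(t,G)⟫ ≤ (½ - m)‖D‖²`,
so `g = ‖D‖²` obeys the linear differential inequality `g' ≤ 2(½ - m) g`. With the integrating
factor `exp (-∫ 2(½ - m))` the product becomes nonincreasing, which is Grönwall's inequality
for `g`; taking square roots gives the claim.
-/

open MeasureTheory Real

section Gronwall

open Set

theorem le_exp_integral_mul_of_hasDerivAt_le_mul {a b : ℝ} {c g g' : ℝ → ℝ}
    (hc : ContinuousOn c (Icc a b)) (hg : ContinuousOn g (Icc a b))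
    (hg' : ∀ t ∈ Ioo a b, HasDerivAt g (g' t) t) (hle : ∀ t ∈ Ioo a b, g' t ≤ c t * g t) :
    ∀ t ∈ Icc a b, g t ≤ exp (∫ s in a..t, c s) * g a := by
  intro t ht
  have hab : a ≤ b := ht.1.trans ht.2
  set A : ℝ → ℝ := fun u => ∫ s in a..u, c s
  have hA : ContinuousOn A (Icc a b) := by
    simpa only [uIcc_of_le hab] using intervalIntegral.continuousOn_primitive_interval
      (hc.integrableOn_Icc.mono_set (uIcc_of_le hab).le)
  have hA' : ∀ u ∈ Ioo a b, HasDerivAt A (c u) u := fun u hu =>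
    intervalIntegral.integral_hasDerivAt_right
      ((hc.mono (Icc_subset_Icc_right hu.2.le)).intervalIntegrable_of_Icc hu.1.le)
      ((hc.mono Ioo_subset_Icc_self).stronglyMeasurableAtFilter isOpen_Ioo u hu)
      (hc.continuousAt (Icc_mem_nhds hu.1 hu.2))
  have hanti : AntitoneOn (fun u => exp (-A u) * g u) (Icc a b) := by
    refine antitoneOn_of_hasDerivWithinAt_nonpos (convex_Icc a b)
      (f' := fun u => exp (-A u) * -c u * g u + exp (-A u) * g' u)
      (hA.neg.rexp.mul hg) (fun u hu => ?_) (fun u hu => ?_) <;> rw [interior_Icc] at hu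
    · exact ((hA' u hu).neg.exp.mul (hg' u hu)).hasDerivWithinAt
    · nlinarith [hle u hu, exp_pos (-A u)]
  have hmono := hanti (left_mem_Icc.2 hab) ht ht.1
  simp only [A, intervalIntegral.integral_same, neg_zero, exp_zero, one_mul, exp_neg] at hmono
  rwa [inv_mul_le_iff₀ (exp_pos _)] at hmono

theorem norm_le_exp_integral_mul_norm_of_inner_le {E : Type*} [NormedAddCommGroup E]
    [InnerProductSpace ℝ E] {a b : ℝ} {c : ℝ → ℝ} {f f' : ℝ → E}
    (hc : ContinuousOn c (Icc a b)) (hf : ContinuousOn f (Icc a b))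
    (hf' : ∀ t ∈ Ioo a b, HasDerivAt f (f' t) t)
    (hle : ∀ t ∈ Ioo a b, inner ℝ (f t) (f' t) ≤ c t * ‖f t‖ ^ 2) :
    ∀ t ∈ Icc a b, ‖f t‖ ≤ exp (∫ s in a..t, c s) * ‖f a‖ := by
  intro t ht
  have hsq := le_exp_integral_mul_of_hasDerivAt_le_mul (c := fun s => 2 * c s)
    (g := fun s => ‖f s‖ ^ 2)
    (continuousOn_const.mul hc) (hf.norm.pow 2) (fun s hs => (hf' s hs).norm_sq)
    (fun s hs => by linarith [hle s hs]) t ht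
  have hrhs : exp (∫ s in a..t, 2 * c s) * ‖f a‖ ^ 2 =
      (exp (∫ s in a..t, c s) * ‖f a‖) ^ 2 := by
    rw [intervalIntegral.integral_const_mul, two_mul, exp_add]
    ring
  exact (pow_le_pow_iff_left₀ (norm_nonneg _) (by positivity) two_ne_zero).1 (hsq.trans_eq hrhs)

end Gronwall

theorem synchronous_coupling_contraction_general {d : ℕ}
    (t₁ t₂ : ℝ) (m : ℝ → ℝ)
    (hm : ContinuousOn m (Set.Icc t₁ t₂))
    (b : ℝ → EuclideanSpace ℝ (Fin d) → EuclideanSpace ℝ (Fin d))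
    (hb : ∀ t ∈ Set.Icc t₁ t₂, ∀ x y : EuclideanSpace ℝ (Fin d),
      (inner ℝ (b t x - b t y) (x - y) : ℝ) ≤ -m t * ‖x - y‖ ^ 2)
    (H G H' G' : ℝ → EuclideanSpace ℝ (Fin d))
    (hH : ∀ t ∈ Set.Icc t₁ t₂, HasDerivAt H (H' t) t)
    (hG : ∀ t ∈ Set.Icc t₁ t₂, HasDerivAt G (G' t) t)
    (hrel : ∀ t ∈ Set.Icc t₁ t₂,
      H' t - G' t = (1 / 2 : ℝ) • (H t - G t) + (b t (H t) - b t (G t))) :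
    ∀ t ∈ Set.Icc t₁ t₂,
      ‖H t - G t‖ ≤ Real.exp (-∫ s in t₁..t, (m s - 1 / 2)) * ‖H t₁ - G t₁‖ := by
  have hD : ∀ t ∈ Set.Icc t₁ t₂, HasDerivAt (fun s => H s - G s) (H' t - G' t) t :=
    fun t ht => (hH t ht).sub (hG t ht)
  have hinner : ∀ s ∈ Set.Ioo t₁ t₂,
      inner ℝ (H s - G s) (H' s - G' s) ≤ -(m s - 1 / 2) * ‖H s - G s‖ ^ 2 := by
    intro s hs
    have hs' := Set.Ioo_subset_Icc_self hs
    rw [hrel s hs', inner_add_right, real_inner_smul_right, real_inner_self_eq_norm_sq,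
      real_inner_comm]
    linarith [hb s hs' (H s) (G s)]
  intro t ht
  have hbound := norm_le_exp_integral_mul_norm_of_inner_le (c := fun s => -(m s - 1 / 2))
    (hm.sub continuousOn_const).neg (fun s hs => (hD s hs).continuousAt.continuousWithinAt)
    (fun s hs => hD s (Set.Ioo_subset_Icc_self hs)) hinner t ht
  rwa [intervalIntegral.integral_neg] at hbound

/-- **Lemma (pathwise synchronous-coupling contraction).**
If `b(t,·)` satisfies `⟨b(t,x) − b(t,y), x − y⟩ ≤ −m(t)‖x − y‖²` and `H, G` are
differentiable with `H' − G' = (1/2)(H − G) + b(t,H) − b(t,G)` on `[t₁,t₂]`, then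
`‖H(t) − G(t)‖ ≤ exp(−∫_{t₁}^t (m(s) − 1/2) ds)·‖H(t₁) − G(t₁)‖`. -/
theorem synchronous_coupling_contraction {d : ℕ}
    (t₁ t₂ : ℝ) (hlt : t₁ < t₂) (m : ℝ → ℝ)
    (hm : ContinuousOn m (Set.Icc t₁ t₂))
    (b : ℝ → EuclideanSpace ℝ (Fin d) → EuclideanSpace ℝ (Fin d))
    (hb : ∀ t ∈ Set.Icc t₁ t₂, ∀ x y : EuclideanSpace ℝ (Fin d),
      (inner ℝ (b t x - b t y) (x - y) : ℝ) ≤ -m t * ‖x - y‖ ^ 2)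
    (H G H' G' : ℝ → EuclideanSpace ℝ (Fin d))
    (hH : ∀ t ∈ Set.Icc t₁ t₂, HasDerivAt H (H' t) t)
    (hG : ∀ t ∈ Set.Icc t₁ t₂, HasDerivAt G (G' t) t)
    (hrel : ∀ t ∈ Set.Icc t₁ t₂,
      H' t - G' t = (1 / 2 : ℝ) • (H t - G t) + (b t (H t) - b t (G t))) :
    ∀ t ∈ Set.Icc t₁ t₂,
      ‖H t - G t‖ ≤ Real.exp (-∫ s in t₁..t, (m s - 1 / 2)) * ‖H t₁ - G t₁‖ :=
  synchronous_coupling_contraction_general t₁ t₂ m hm b hb H G H' G' hH hG hrel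
end

section
/- Let f : ℝ^d → ℝ be three times continuously differentiable with Hessian L_F-Lipschitz in the Frobenius norm (‖∇²f(x) − ∇²f(y)‖_F ≤ L_F·‖x − y‖ for all x, y). Then for every x ∈ ℝ^d, the Euclidean norm of the vector Σ_{j=1}^{d} (∂²/∂x_j²) ∇f(x), i.e. the vector whose i-th coordinate is Σ_{j=1}^{d} ∂³f(x)/∂x_i∂x_j∂x_j, is at most d·L_F. -/
/-! Each column `y ↦ H y e_j` of a field of matrices `H` that is `L`-Lipschitz in the Frobenius
norm is `L`-Lipschitz in the Euclidean norm, so by the converse of the mean value inequality its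
derivative has operator norm at most `L`. Hence `‖∂_j (H e_j)‖ ≤ L` for each of the `d`
columns, and the triangle inequality gives `d * L`; apply this to the Hessian `H = D(∇f)`. -/

open Real

/-- The Frobenius norm of a (continuous) linear map on `ℝ^d`. -/
noncomputable def frobNorm {d : ℕ}
    (A : EuclideanSpace ℝ (Fin d) →L[ℝ] EuclideanSpace ℝ (Fin d)) : ℝ :=
  Real.sqrt (∑ i, ∑ j, (A (EuclideanSpace.single j 1) i) ^ 2)

section FrobeniusLipschitz

variable {d : ℕ} {L : ℝ}

lemma frobNorm_nonneg (A : EuclideanSpace ℝ (Fin d) →L[ℝ] EuclideanSpace ℝ (Fin d)) :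
    0 ≤ frobNorm A :=
  Real.sqrt_nonneg _

lemma norm_apply_single_le_frobNorm
    (A : EuclideanSpace ℝ (Fin d) →L[ℝ] EuclideanSpace ℝ (Fin d)) (j : Fin d) :
    ‖A (EuclideanSpace.single j 1)‖ ≤ frobNorm A := by
  rw [EuclideanSpace.norm_eq, frobNorm]
  refine Real.sqrt_le_sqrt (Finset.sum_le_sum fun i _ => ?_)
  rw [Real.norm_eq_abs, sq_abs]
  exact Finset.single_le_sum (f := fun j' => (A (EuclideanSpace.single j' 1) i) ^ 2)
    (fun _ _ => sq_nonneg _) (Finset.mem_univ j)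

lemma norm_sub_apply_single_le_of_frobNorm_le {E : Type*} [SeminormedAddCommGroup E]
    {H : E → EuclideanSpace ℝ (Fin d) →L[ℝ] EuclideanSpace ℝ (Fin d)}
    (hH : ∀ x y, frobNorm (H x - H y) ≤ L * ‖x - y‖) (j : Fin d) (x y : E) :
    ‖H x (EuclideanSpace.single j 1) - H y (EuclideanSpace.single j 1)‖ ≤ L * ‖x - y‖ := by
  rw [← sub_apply]
  exact (norm_apply_single_le_frobNorm _ j).trans (hH x y)

variable {H : EuclideanSpace ℝ (Fin d) → EuclideanSpace ℝ (Fin d) →L[ℝ] EuclideanSpace ℝ (Fin d)}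

lemma nonneg_of_frobNorm_le (hH : ∀ x y, frobNorm (H x - H y) ≤ L * ‖x - y‖) (j : Fin d) :
    0 ≤ L := by
  simpa [PiLp.norm_single] using (frobNorm_nonneg _).trans (hH (EuclideanSpace.single j 1) 0)

lemma norm_fderiv_apply_single_apply_single_le
    (hH : ∀ x y, frobNorm (H x - H y) ≤ L * ‖x - y‖) (x : EuclideanSpace ℝ (Fin d))
    (j : Fin d) :
    ‖fderiv ℝ (fun y => H y (EuclideanSpace.single j 1)) x (EuclideanSpace.single j 1)‖ ≤ L :=
  calc ‖fderiv ℝ (fun y => H y (EuclideanSpace.single j 1)) x (EuclideanSpace.single j 1)‖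
      ≤ ‖fderiv ℝ (fun y => H y (EuclideanSpace.single j 1)) x‖ *
          ‖(EuclideanSpace.single j 1 : EuclideanSpace ℝ (Fin d))‖ :=
        ContinuousLinearMap.le_opNorm _ _
    _ = ‖fderiv ℝ (fun y => H y (EuclideanSpace.single j 1)) x‖ := by
        rw [PiLp.norm_single, norm_one, mul_one]
    _ ≤ L := norm_fderiv_le_of_lip' ℝ (nonneg_of_frobNorm_le hH j)
        (Filter.Eventually.of_forall fun y => norm_sub_apply_single_le_of_frobNorm_le hH j y x)

end FrobeniusLipschitz

theorem laplacian_of_gradient_bound_general {d : ℕ}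
    (f : EuclideanSpace ℝ (Fin d) → ℝ) (L_F : ℝ)
    (hlip : ∀ x y : EuclideanSpace ℝ (Fin d),
      frobNorm (fderiv ℝ (gradient f) x - fderiv ℝ (gradient f) y) ≤ L_F * ‖x - y‖) :
    ∀ x : EuclideanSpace ℝ (Fin d),
      ‖∑ j, (fderiv ℝ (fun y => fderiv ℝ (gradient f) y (EuclideanSpace.single j 1))
          x) (EuclideanSpace.single j 1)‖ ≤ d * L_F := by
  intro x
  calc ‖∑ j, (fderiv ℝ (fun y => fderiv ℝ (gradient f) y (EuclideanSpace.single j 1))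
          x) (EuclideanSpace.single j 1)‖
      ≤ ∑ j, ‖(fderiv ℝ (fun y => fderiv ℝ (gradient f) y (EuclideanSpace.single j 1))
          x) (EuclideanSpace.single j 1)‖ := norm_sum_le _ _
    _ ≤ ∑ _j : Fin d, L_F :=
      Finset.sum_le_sum fun j _ => norm_fderiv_apply_single_apply_single_le hlip x j
    _ = d * L_F := by simp

/-- **Lemma (bound on `Σ_j ∂²_{x_j} ∇f`).**
If `f ∈ C³(ℝ^d)` and its Hessian is `L_F`-Lipschitz in the Frobenius norm, then the
vector `Σ_{j=1}^d (∂²/∂x_j²) ∇f(x)` (whose `i`-th coordinate is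
`Σ_j ∂³f/∂x_i∂x_j∂x_j`) has Euclidean norm at most `d·L_F`. -/
theorem laplacian_of_gradient_bound {d : ℕ}
    (f : EuclideanSpace ℝ (Fin d) → ℝ) (L_F : ℝ)
    (hf : ContDiff ℝ 3 f)
    (hlip : ∀ x y : EuclideanSpace ℝ (Fin d),
      frobNorm (fderiv ℝ (gradient f) x - fderiv ℝ (gradient f) y) ≤ L_F * ‖x - y‖) :
    ∀ x : EuclideanSpace ℝ (Fin d),
      ‖∑ j, (fderiv ℝ (fun y => fderiv ℝ (gradient f) y (EuclideanSpace.single j 1))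
          x) (EuclideanSpace.single j 1)‖ ≤ d * L_F :=
  laplacian_of_gradient_bound_general f L_F hlip
end

section
/- Let p : (0,∞) × ℝ^d → (0,∞), (t,x) ↦ p_t(x), be smooth and satisfy the Fokker–Planck equation ∂_t p_t(x) = (d/2)·p_t(x) + (1/2)·⟨x, ∇p_t(x)⟩ + (1/2)·Σ_{i=1}^{d} ∂²p_t(x)/∂x_i², and assume ∂_t and ∇ commute on p (i.e. ∂_t∇p_t(x) = ∇∂_t p_t(x)). Then the time derivative of the score satisfies, for all t > 0 and x ∈ ℝ^d: ∂_t ∇log p_t(x) = (1/2)·∇log p_t(x) + (1/2)·∇²log p_t(x)·x + (1/2)·∇(Tr(∇²log p_t(x))) + (1/2)·∇(‖∇log p_t(x)‖²). -/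
open Real

/-- The score function `∇ log q` of a positive density `q` on `ℝ^d`. -/
noncomputable def score {d : ℕ} (q : EuclideanSpace ℝ (Fin d) → ℝ)
    (x : EuclideanSpace ℝ (Fin d)) : EuclideanSpace ℝ (Fin d) :=
  gradient (fun y => Real.log (q y)) x

section Aux
open InnerProductSpace
variable {d : ℕ}

private lemma grad_eq' (f : EuclideanSpace ℝ (Fin d) → ℝ) (x : EuclideanSpace ℝ (Fin d)) :
    gradient f x = (toDual ℝ (EuclideanSpace ℝ (Fin d))).symm (fderiv ℝ f x) := rfl

private lemma toDual_symm_coord (L : EuclideanSpace ℝ (Fin d) →L[ℝ] ℝ) (i : Fin d) :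
    (toDual ℝ (EuclideanSpace ℝ (Fin d))).symm L i = L (EuclideanSpace.single i 1) := by
  have h := toDual_symm_apply (𝕜 := ℝ) (E := EuclideanSpace ℝ (Fin d)) (y := L)
    (x := EuclideanSpace.single i 1)
  rw [← h, real_inner_comm, EuclideanSpace.inner_single_left]
  simp


private lemma inner_toDual_symm (L : EuclideanSpace ℝ (Fin d) →L[ℝ] ℝ)
    (u : EuclideanSpace ℝ (Fin d)) :
    (inner ℝ u ((toDual ℝ (EuclideanSpace ℝ (Fin d))).symm L) : ℝ) = L u := by
  rw [real_inner_comm]; exact toDual_symm_apply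

private lemma hasFDerivAt_inv_comp {f : EuclideanSpace ℝ (Fin d) → ℝ}
    {f' : EuclideanSpace ℝ (Fin d) →L[ℝ] ℝ}
    {x : EuclideanSpace ℝ (Fin d)} (hf : HasFDerivAt f f' x) (h : f x ≠ 0) :
    HasFDerivAt (fun y => (f y)⁻¹) ((-(f x ^ 2)⁻¹) • f') x :=
  (hasDerivAt_inv h).comp_hasFDerivAt x hf

private lemma fderiv_grad_apply (f : EuclideanSpace ℝ (Fin d) → ℝ)
    (y h : EuclideanSpace ℝ (Fin d)) :
    fderiv ℝ (fun z => gradient f z) y h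
      = (toDual ℝ (EuclideanSpace ℝ (Fin d))).symm (fderiv ℝ (fderiv ℝ f) y h) := by
  have he : (fun z => gradient f z)
      = (⇑(toDual ℝ (EuclideanSpace ℝ (Fin d))).symm ∘ fderiv ℝ f) := rfl
  rw [he, LinearIsometryEquiv.comp_fderiv]
  rfl

private lemma fderiv_apply_swap {f : EuclideanSpace ℝ (Fin d) → ℝ}
    {y : EuclideanSpace ℝ (Fin d)} (hf : ContDiffAt ℝ (⊤ : ℕ∞) f y)
    (u w : EuclideanSpace ℝ (Fin d)) :
    fderiv ℝ (fun z => fderiv ℝ f z u) y w = fderiv ℝ (fderiv ℝ f) y w u := by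
  rw [fderiv_clm_apply ((hf.fderiv_right (m := 1) (WithTop.coe_le_coe.mpr le_top)).differentiableAt one_ne_zero)
    (differentiableAt_const u)]
  simp

private lemma euclid_norm_sq (u : EuclideanSpace ℝ (Fin d)) :
    ‖u‖ ^ 2 = ∑ i, (u i) ^ 2 := by
  rw [EuclideanSpace.norm_eq, Real.sq_sqrt (by positivity)]
  simp [sq_abs]



variable {q : EuclideanSpace ℝ (Fin d) → ℝ}
  (hq : ∀ z, ContDiffAt ℝ (⊤ : ℕ∞) q z) (hq0 : ∀ z, 0 < q z)
include hq hq0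

private lemma score_eq (y : EuclideanSpace ℝ (Fin d)) :
    score q y = (q y)⁻¹ • gradient q y := by
  have hd : HasFDerivAt q (fderiv ℝ q y) y := ((hq y).differentiableAt (by simp)).hasFDerivAt
  have hl := hd.log (ne_of_gt (hq0 y))
  show gradient (fun z => Real.log (q z)) y = _
  rw [grad_eq', grad_eq', hl.fderiv, map_smul]

private lemma score_hasFDerivAt (y : EuclideanSpace ℝ (Fin d)) :
    HasFDerivAt (score q)
      ((q y)⁻¹ • fderiv ℝ (fun z => gradient q z) y
        + ((-(q y ^ 2)⁻¹) • fderiv ℝ q y).smulRight (gradient q y)) y := by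
  have h1 : HasFDerivAt (fun z => (q z)⁻¹) ((-(q y ^ 2)⁻¹) • fderiv ℝ q y) y :=
    hasFDerivAt_inv_comp ((hq y).differentiableAt (by simp)).hasFDerivAt (ne_of_gt (hq0 y))
  have hVc : ContDiffAt ℝ (⊤ : ℕ∞) (fun z => gradient q z) y :=
    ((toDual ℝ (EuclideanSpace ℝ (Fin d))).symm.contDiff.contDiffAt).comp y
      ((hq y).fderiv_right (by simp))
  have h2 : HasFDerivAt (fun z => gradient q z) (fderiv ℝ (fun z => gradient q z) y) y :=
    (hVc.differentiableAt (by simp)).hasFDerivAt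
  have he : score q = fun z => (q z)⁻¹ • gradient q z := funext (score_eq hq hq0)
  rw [he]
  exact h1.smul h2

/-- the trace summand -/
private lemma trace_summand (y : EuclideanSpace ℝ (Fin d)) (i : Fin d) :
    fderiv ℝ (score q) y (EuclideanSpace.single i 1) i
      = (q y)⁻¹ * fderiv ℝ (fun z => fderiv ℝ q z (EuclideanSpace.single i 1)) y
          (EuclideanSpace.single i 1)
        - (q y ^ 2)⁻¹ * (fderiv ℝ q y (EuclideanSpace.single i 1)) ^ 2 := by
  rw [(score_hasFDerivAt hq hq0 y).fderiv]
  have hcoordV : fderiv ℝ (fun z => gradient q z) y (EuclideanSpace.single i 1) i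
      = fderiv ℝ (fun z => fderiv ℝ q z (EuclideanSpace.single i 1)) y
          (EuclideanSpace.single i 1) := by
    rw [fderiv_grad_apply, toDual_symm_coord, fderiv_apply_swap (hq y)]
  have hgcoord : gradient q y i = fderiv ℝ q y (EuclideanSpace.single i 1) := by
    rw [grad_eq', toDual_symm_coord]
  simp only [ContinuousLinearMap.add_apply, ContinuousLinearMap.coe_smul',
    Pi.smul_apply, ContinuousLinearMap.smulRight_apply, ContinuousLinearMap.smul_apply,
    PiLp.add_apply, PiLp.smul_apply, smul_eq_mul]
  rw [hcoordV, hgcoord]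
  ring

private lemma score_norm_sq (y : EuclideanSpace ℝ (Fin d)) :
    ‖score q y‖ ^ 2
      = (q y ^ 2)⁻¹ * ∑ i, (fderiv ℝ q y (EuclideanSpace.single i 1)) ^ 2 := by
  rw [euclid_norm_sq, Finset.mul_sum]
  refine Finset.sum_congr rfl fun i _ => ?_
  rw [score_eq hq hq0]
  have hgcoord : gradient q y i = fderiv ℝ q y (EuclideanSpace.single i 1) := by
    rw [grad_eq', toDual_symm_coord]
  simp only [PiLp.smul_apply, smul_eq_mul]
  rw [hgcoord]
  ring

omit hq hq0 in
private lemma hasFDerivAt_inner_grad {q : EuclideanSpace ℝ (Fin d) → ℝ}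
    {x : EuclideanSpace ℝ (Fin d)} (hq : ∀ z, ContDiffAt ℝ (⊤ : ℕ∞) q z) :
    HasFDerivAt (fun y => (inner ℝ y (gradient q y) : ℝ))
      ((toDual ℝ (EuclideanSpace ℝ (Fin d)))
        (gradient q x + fderiv ℝ (fun z => gradient q z) x x)) x := by
  have hVc : ContDiffAt ℝ (⊤ : ℕ∞) (fun z => gradient q z) x :=
    ((toDual ℝ (EuclideanSpace ℝ (Fin d))).symm.contDiff.contDiffAt).comp x
      ((hq x).fderiv_right (by simp))
  have hV' : HasFDerivAt (fun z => gradient q z)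
      (fderiv ℝ (fun z => gradient q z) x) x :=
    (hVc.differentiableAt (by simp)).hasFDerivAt
  have h := (hasFDerivAt_id x).inner ℝ hV'
  have hsym := (hq x).isSymmSndFDerivAt (by rw [minSmoothness_of_isRCLikeNormedField]; exact WithTop.coe_le_coe.mpr le_top)
  refine h.congr_fderiv ?_
  symm
  apply ContinuousLinearMap.ext; intro u
  rw [ContinuousLinearMap.comp_apply]
  rw [fderivInnerCLM_apply]
  simp only [ContinuousLinearMap.prod_apply, ContinuousLinearMap.coe_id', id_eq,
    toDual_apply_apply]
  have h1 : (inner ℝ x (fderiv ℝ (fun z => gradient q z) x u) : ℝ)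
      = fderiv ℝ (fderiv ℝ q) x u x := by
    rw [fderiv_grad_apply, inner_toDual_symm]
  have h2 : fderiv ℝ (fderiv ℝ q) x u x = fderiv ℝ (fderiv ℝ q) x x u := hsym u x
  have h3 : (inner ℝ (fderiv ℝ (fun z => gradient q z) x x) u : ℝ)
      = fderiv ℝ (fderiv ℝ q) x x u := by
    rw [fderiv_grad_apply]; exact toDual_symm_apply
  rw [inner_add_left, h3, ← h2, ← h1, real_inner_comm u (gradient q x)]
  ring

end Aux

/-- **Lemma (time derivative of the score via the Fokker–Planck equation).**
If `p_t` is smooth, positive and satisfies the OU Fokker–Planck equation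
`∂_t p_t = (d/2)p_t + (1/2)⟨x, ∇p_t⟩ + (1/2)Δp_t`, and `∂_t` commutes with `∇` on
`p`, then
`∂_t ∇log p_t(x) = (1/2)∇log p_t(x) + (1/2)∇²log p_t(x)·x
  + (1/2)∇(Tr ∇²log p_t(x)) + (1/2)∇(‖∇log p_t(x)‖²)`. -/
theorem score_time_derivative_fokker_planck {d : ℕ}
    (p : ℝ → EuclideanSpace ℝ (Fin d) → ℝ)
    (hpos : ∀ t, 0 < t → ∀ x, 0 < p t x)
    (hsmooth : ContDiffOn ℝ (⊤ : ℕ∞) (fun q : ℝ × EuclideanSpace ℝ (Fin d) => p q.1 q.2)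
      (Set.Ioi (0 : ℝ) ×ˢ Set.univ))
    -- the Fokker–Planck equation
    (hFP : ∀ t, 0 < t → ∀ x : EuclideanSpace ℝ (Fin d),
      deriv (fun τ => p τ x) t
        = (d : ℝ) / 2 * p t x + 1 / 2 * (inner ℝ x (gradient (p t) x) : ℝ)
          + 1 / 2 * ∑ i, fderiv ℝ (fun y => fderiv ℝ (p t) y
              (EuclideanSpace.single i 1)) x (EuclideanSpace.single i 1))
    -- `∂_t` and `∇` commute on `p`
    (hcomm : ∀ t, 0 < t → ∀ x : EuclideanSpace ℝ (Fin d),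
      deriv (fun τ => gradient (p τ) x) t
        = gradient (fun y => deriv (fun τ => p τ y) t) x) :
    ∀ t, 0 < t → ∀ x : EuclideanSpace ℝ (Fin d),
      deriv (fun τ => score (p τ) x) t
        = (1 / 2 : ℝ) • score (p t) x
          + (1 / 2 : ℝ) • (fderiv ℝ (score (p t)) x x)
          + (1 / 2 : ℝ) • gradient (fun y => ∑ i, fderiv ℝ (score (p t)) y
              (EuclideanSpace.single i 1) i) x
          + (1 / 2 : ℝ) • gradient (fun y => ‖score (p t) y‖ ^ 2) x := by
  intro t ht x
  have hopen : IsOpen ((Set.Ioi (0:ℝ)) ×ˢ (Set.univ : Set (EuclideanSpace ℝ (Fin d)))) :=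
    isOpen_Ioi.prod isOpen_univ
  have hCA : ∀ s, 0 < s → ∀ y, ContDiffAt ℝ (⊤ : ℕ∞)
      (fun q : ℝ × EuclideanSpace ℝ (Fin d) => p q.1 q.2) (s, y) :=
    fun s hs y => hsmooth.contDiffAt (hopen.mem_nhds (by simp [hs]))
  have hqs : ∀ s, 0 < s → ∀ y, ContDiffAt ℝ (⊤ : ℕ∞) (p s) y := by
    intro s hs y
    exact (hCA s hs y).comp y (ContDiffAt.prodMk (contDiffAt_const (c := s)) contDiffAt_id)
  have hq : ∀ y, ContDiffAt ℝ (⊤ : ℕ∞) (p t) y := hqs t ht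
  have hq0 : ∀ y, 0 < p t y := hpos t ht
  -- time differentiability
  have hGt : ContDiffAt ℝ (⊤ : ℕ∞) (fun τ => fderiv ℝ (p τ) x) t :=
    ContDiffAt.fderiv (f := fun (τ:ℝ) (y:EuclideanSpace ℝ (Fin d)) => p τ y)
      (g := fun _ : ℝ => x) (hCA t ht x) contDiffAt_const (by simp)
  have hGdiff : DifferentiableAt ℝ (fun τ => gradient (p τ) x) t := by
    have he : (fun τ => gradient (p τ) x)
        = fun τ => (InnerProductSpace.toDual ℝ (EuclideanSpace ℝ (Fin d))).symm (fderiv ℝ (p τ) x) := rfl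
    rw [he]
    exact (((InnerProductSpace.toDual ℝ (EuclideanSpace ℝ (Fin d))).symm.contDiff.contDiffAt).comp t
      hGt).differentiableAt (by simp)
  have hpt_time : DifferentiableAt ℝ (fun τ => p τ x) t :=
    ((hCA t ht x).comp t (ContDiffAt.prodMk (contDiffAt_id (x := t))
      (contDiffAt_const (c := x)))).differentiableAt (by simp)
  -- time derivative of the score
  have hd1 : HasDerivAt (fun τ => p τ x) (deriv (fun τ => p τ x) t) t := hpt_time.hasDerivAt
  have hInvD : HasDerivAt (fun τ => (p τ x)⁻¹)
      (-(deriv (fun τ => p τ x) t) / p t x ^ 2) t := hd1.inv (hq0 x).ne'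
  have hGD : HasDerivAt (fun τ => gradient (p τ) x)
      (deriv (fun τ => gradient (p τ) x) t) t := hGdiff.hasDerivAt
  have hsm := hInvD.fun_smul hGD
  have hEv : (fun τ => score (p τ) x) =ᶠ[nhds t]
      (fun τ => (p τ x)⁻¹ • gradient (p τ) x) := by
    filter_upwards [Ioi_mem_nhds ht] with τ hτ
    exact score_eq (hqs τ hτ) (hpos τ hτ) x
  -- differentiability of auxiliary space functions
  have hDi : ∀ (i : Fin d) y, ContDiffAt ℝ (⊤ : ℕ∞)
      (fun z => fderiv ℝ (p t) z (EuclideanSpace.single i 1)) y :=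
    fun i y => ((hq y).fderiv_right (by simp)).clm_apply contDiffAt_const
  have hΦdiff : DifferentiableAt ℝ (fun y => ∑ i, fderiv ℝ
      (fun z => fderiv ℝ (p t) z (EuclideanSpace.single i 1)) y
      (EuclideanSpace.single i 1)) x :=
    DifferentiableAt.fun_sum fun i _ =>
      ((((hDi i x).fderiv_right (m := 1) (WithTop.coe_le_coe.mpr le_top)).clm_apply contDiffAt_const).differentiableAt one_ne_zero)
  have hNdiff : DifferentiableAt ℝ (fun y => ∑ i,
      (fderiv ℝ (p t) y (EuclideanSpace.single i 1)) ^ 2) x :=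
    DifferentiableAt.fun_sum fun i _ => ((hDi i x).differentiableAt (by simp)).pow 2
  have hSdiff : DifferentiableAt ℝ (fun y => (p t y ^ 2)⁻¹ * ∑ i,
      (fderiv ℝ (p t) y (EuclideanSpace.single i 1)) ^ 2) x :=
    ((((hq x).differentiableAt (by simp)).pow 2).inv (pow_ne_zero 2 (hq0 x).ne')).mul hNdiff
  -- gradient of the FP right-hand side
  have hF1 : HasFDerivAt (fun y => (d:ℝ)/2 * p t y) (((d:ℝ)/2) • fderiv ℝ (p t) x) x :=
    ((hq x).differentiableAt (by simp)).hasFDerivAt.const_mul _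
  have hF2 : HasFDerivAt (fun y => (1:ℝ)/2 * (inner ℝ y (gradient (p t) y) : ℝ))
      (((1:ℝ)/2) • (InnerProductSpace.toDual ℝ (EuclideanSpace ℝ (Fin d)))
        (gradient (p t) x + fderiv ℝ (fun z => gradient (p t) z) x x)) x :=
    (hasFDerivAt_inner_grad hq).const_mul _
  have hF3 : HasFDerivAt (fun y => (1:ℝ)/2 * ∑ i, fderiv ℝ
      (fun z => fderiv ℝ (p t) z (EuclideanSpace.single i 1)) y (EuclideanSpace.single i 1))
      (((1:ℝ)/2) • fderiv ℝ (fun y => ∑ i, fderiv ℝ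
        (fun z => fderiv ℝ (p t) z (EuclideanSpace.single i 1)) y
        (EuclideanSpace.single i 1)) x) x :=
    hΦdiff.hasFDerivAt.const_mul _
  have hFd := (hF1.fun_add hF2).fun_add hF3
  have hgradF : gradient (fun y => deriv (fun τ => p τ y) t) x
      = ((d:ℝ)/2) • gradient (p t) x
        + ((1:ℝ)/2) • (gradient (p t) x + fderiv ℝ (fun z => gradient (p t) z) x x)
        + ((1:ℝ)/2) • gradient (fun y => ∑ i, fderiv ℝ
            (fun z => fderiv ℝ (p t) z (EuclideanSpace.single i 1)) y
            (EuclideanSpace.single i 1)) x := by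
    have hfun : (fun y => deriv (fun τ => p τ y) t)
        = fun y => ((d:ℝ)/2 * p t y + 1/2 * (inner ℝ y (gradient (p t) y) : ℝ))
          + 1/2 * ∑ i, fderiv ℝ (fun z => fderiv ℝ (p t) z (EuclideanSpace.single i 1)) y
              (EuclideanSpace.single i 1) := by
      funext y
      rw [hFP t ht y]
    rw [hfun, grad_eq', hFd.fderiv]
    simp only [map_add, map_smul, LinearIsometryEquiv.symm_apply_apply]
    rw [← grad_eq', ← grad_eq']
  -- scalar identification
  have hip : (inner ℝ x (gradient (p t) x) : ℝ) = fderiv ℝ (p t) x x := by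
    rw [grad_eq']; exact inner_toDual_symm _ _
  -- the Hessian-of-score term
  have hterm2 : fderiv ℝ (score (p t)) x x
      = (p t x)⁻¹ • fderiv ℝ (fun z => gradient (p t) z) x x
        + (-(p t x ^ 2)⁻¹ * fderiv ℝ (p t) x x) • gradient (p t) x := by
    rw [(score_hasFDerivAt hq hq0 x).fderiv]
    simp only [ContinuousLinearMap.add_apply, ContinuousLinearMap.coe_smul',
      Pi.smul_apply, ContinuousLinearMap.smulRight_apply, ContinuousLinearMap.smul_apply,
      smul_eq_mul]
  -- the trace function and the norm-square function
  have hT : (fun y => ∑ i, fderiv ℝ (score (p t)) y (EuclideanSpace.single i 1) i)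
      = fun y => (p t y)⁻¹ * (∑ i, fderiv ℝ (fun z => fderiv ℝ (p t) z
            (EuclideanSpace.single i 1)) y (EuclideanSpace.single i 1))
          - (p t y ^ 2)⁻¹ * ∑ i, (fderiv ℝ (p t) y (EuclideanSpace.single i 1)) ^ 2 := by
    funext y
    rw [Finset.sum_congr rfl fun i _ => trace_summand (hqs t ht) (hpos t ht) y i,
      Finset.sum_sub_distrib, ← Finset.mul_sum, ← Finset.mul_sum]
  have hSfun : (fun y => ‖score (p t) y‖ ^ 2)
      = fun y => (p t y ^ 2)⁻¹ * ∑ i, (fderiv ℝ (p t) y (EuclideanSpace.single i 1)) ^ 2 :=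
    funext fun y => score_norm_sq (hqs t ht) (hpos t ht) y
  have hPΦ : HasFDerivAt (fun y => (p t y)⁻¹ * ∑ i, fderiv ℝ
      (fun z => fderiv ℝ (p t) z (EuclideanSpace.single i 1)) y (EuclideanSpace.single i 1))
      ((p t x)⁻¹ • fderiv ℝ (fun y => ∑ i, fderiv ℝ (fun z => fderiv ℝ (p t) z
          (EuclideanSpace.single i 1)) y (EuclideanSpace.single i 1)) x
        + (∑ i, fderiv ℝ (fun z => fderiv ℝ (p t) z (EuclideanSpace.single i 1)) x
            (EuclideanSpace.single i 1)) • ((-(p t x ^ 2)⁻¹) • fderiv ℝ (p t) x)) x :=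
    (hasFDerivAt_inv_comp ((hq x).differentiableAt (by simp)).hasFDerivAt
      (hq0 x).ne').mul hΦdiff.hasFDerivAt
  have hTd := hPΦ.fun_sub hSdiff.hasFDerivAt
  have hgradT : gradient (fun y => (p t y)⁻¹ * (∑ i, fderiv ℝ (fun z => fderiv ℝ (p t) z
        (EuclideanSpace.single i 1)) y (EuclideanSpace.single i 1))
        - (p t y ^ 2)⁻¹ * ∑ i, (fderiv ℝ (p t) y (EuclideanSpace.single i 1)) ^ 2) x
      = ((p t x)⁻¹ • gradient (fun y => ∑ i, fderiv ℝ (fun z => fderiv ℝ (p t) z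
            (EuclideanSpace.single i 1)) y (EuclideanSpace.single i 1)) x
          + (∑ i, fderiv ℝ (fun z => fderiv ℝ (p t) z (EuclideanSpace.single i 1)) x
              (EuclideanSpace.single i 1)) • ((-(p t x ^ 2)⁻¹) • gradient (p t) x))
        - gradient (fun y => (p t y ^ 2)⁻¹ * ∑ i,
            (fderiv ℝ (p t) y (EuclideanSpace.single i 1)) ^ 2) x := by
    rw [grad_eq', hTd.fderiv, map_sub, map_add, map_smul, map_smul, map_smul,
      ← grad_eq', ← grad_eq', ← grad_eq']
  -- assemble everything
  rw [hEv.deriv_eq, hsm.deriv, hFP t ht x, hcomm t ht x, hgradF,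
    score_eq (hqs t ht) (hpos t ht) x, hterm2, hT, hSfun, hgradT, hip]
  have hA0 : p t x ≠ 0 := (hq0 x).ne'
  set A := p t x with hA
  set v := gradient (p t) x with hv
  set Hx := fderiv ℝ (fun z => gradient (p t) z) x x with hHx
  set w := gradient (fun y => ∑ i, fderiv ℝ (fun z => fderiv ℝ (p t) z
      (EuclideanSpace.single i 1)) y (EuclideanSpace.single i 1)) x with hw
  set Sg := gradient (fun y => (p t y ^ 2)⁻¹ * ∑ i,
      (fderiv ℝ (p t) y (EuclideanSpace.single i 1)) ^ 2) x with hSg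
  set Px := ∑ i, fderiv ℝ (fun z => fderiv ℝ (p t) z (EuclideanSpace.single i 1)) x
      (EuclideanSpace.single i 1) with hPx
  set ipx := fderiv ℝ (p t) x x with hipx
  clear_value A v Hx w Sg Px ipx
  clear hterm2 hgradT hsm hT hSfun hPΦ hTd hgradF hEv hFd hF1 hF2 hF3 hip
  clear hSdiff hNdiff hΦdiff hDi hGD hInvD hd1 hpt_time hGdiff hGt hq hq0 hqs hCA hFP hcomm
  clear hw hSg hHx hv hA hPx hipx
  match_scalars
  · field_simp
    ring
  · ring
  · ring
  · norm_num
end
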